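/- arXiv:1803.03912 — 2 statements merged into one kernel-verified Lean document; each statement's English description precedes it below -/
import Mathlib

section
/- Let F be a field, n ≥ 1, K ≥ 2 an integer, and (m_1,...,m_n) an n-tuple of positive integers. Then the number of monomial ideals I of F[X_1,...,X_n] such that the quotient F[X_1,...,X_n]/I has dimension K over F and, for every i = 1,...,n, X_i^{m_i} ∈ I while X_i^{m_i−1} ∉ I, is at most (K + n − 2)^{(n−1)(K−1)} · (2K − 3)^{K−2}. -/
open MvPolynomial

/-- An ideal of `F[X_1,…,X_n]` is a *monomial ideal* if it is generated by
a set of monomials `X^a = X_1^{a_1} ⋯ X_n^{a_n}`. -/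
def IsMonomialIdeal {n : ℕ} {F : Type} [Field F] (I : Ideal (MvPolynomial (Fin n) F)) : Prop :=
  ∃ S : Set (Fin n →₀ ℕ), I = Ideal.span ((fun a => (monomial a (1 : F))) '' S)

/-!
The standard monomials of an ideal `I` (the exponents `a` with `X^a ∉ I`) form a lower set of
`ℕⁿ`; for a monomial ideal they determine `I`, and the corresponding monomials span a complement
of `I` in `F[X]`, so `dim F[X]/I` is their number. It therefore suffices to count lower sets of
size `K`. Removing a maximal element `a = b + eᵢ` from a lower set of size `k + 1` leaves a lower
set of size `k` that contains `b`, so every lower set of size `k + 1` arises from one of size `k`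
by one of at most `n k` choices of `(b, i)`. Hence there are at most `n^(K-1) (K-1)!` lower sets
of size `K`, and this is below the stated bound.
-/

open scoped Nat

section LowerSets

variable {σ : Type*} [DecidableEq σ]

theorem Finset.exists_isLowerSet_eq_insert_add_single {D : Finset (σ →₀ ℕ)}
    (hD : IsLowerSet (D : Set (σ →₀ ℕ))) (hcard : 2 ≤ D.card) :
    ∃ D' : Finset (σ →₀ ℕ), IsLowerSet (D' : Set (σ →₀ ℕ)) ∧ D'.card + 1 = D.card ∧
      ∃ b ∈ D', ∃ i, D = insert (b + Finsupp.single i 1) D' := by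
  obtain ⟨a, haD, hamax⟩ := D.exists_maximal (Finset.card_pos.1 (by omega))
  have ha0 : a ≠ 0 := by
    rintro rfl
    obtain ⟨c, hcD, hc0⟩ := D.exists_mem_ne hcard 0
    exact hc0 (le_antisymm (hamax hcD zero_le) zero_le)
  obtain ⟨i, hi⟩ : ∃ i, a i ≠ 0 := by
    by_contra! h
    exact ha0 (Finsupp.ext h)
  set b := a - Finsupp.single i 1
  have hba : b + Finsupp.single i 1 = a :=
    tsub_add_cancel_of_le (Finsupp.single_le_iff.2 (Nat.one_le_iff_ne_zero.2 hi))
  have hb_ne : b ≠ a := by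
    intro h
    rw [h, add_eq_left, Finsupp.single_eq_zero] at hba
    exact one_ne_zero hba
  refine ⟨D.erase a, fun c d hdc hc => ?_, Finset.card_erase_add_one haD, b,
    Finset.mem_erase.2 ⟨hb_ne, hD (hba ▸ le_self_add) haD⟩, i,
    by rw [hba, Finset.insert_erase haD]⟩
  obtain ⟨hca, hcD⟩ := Finset.mem_erase.1 hc
  refine Finset.mem_erase.2 ⟨?_, hD hdc hcD⟩
  rintro rfl
  exact hca (le_antisymm (hamax hcD hdc) hdc)

variable (σ) in
theorem exists_finset_covering_lowerSets_card [Fintype σ] (k : ℕ) :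
    ∃ T : Finset (Finset (σ →₀ ℕ)), T.card ≤ Fintype.card σ ^ k * k ! ∧
      ∀ D : Finset (σ →₀ ℕ), IsLowerSet (D : Set (σ →₀ ℕ)) → D.card = k + 1 → D ∈ T := by
  induction k with
  | zero =>
    refine ⟨{{0}}, by simp, fun D hD hcard => ?_⟩
    obtain ⟨a, rfl⟩ := Finset.card_eq_one.1 hcard
    obtain rfl := Finset.mem_singleton.1 (hD zero_le (Finset.mem_singleton_self a))
    exact Finset.mem_singleton_self _
  | succ k ih =>
    obtain ⟨T, hTcard, hT⟩ := ih
    refine ⟨(T.filter (·.card = k + 1)).biUnion fun D =>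
      (D ×ˢ Finset.univ).image fun p => insert (p.1 + Finsupp.single p.2 1) D, ?_, ?_⟩
    · calc _ ≤ (T.filter (·.card = k + 1)).card * ((k + 1) * Fintype.card σ) :=
            Finset.card_biUnion_le_card_mul _ _ _ fun D hD => Finset.card_image_le.trans
              (by rw [Finset.card_product, (Finset.mem_filter.1 hD).2, Finset.card_univ])
        _ ≤ Fintype.card σ ^ k * k ! * ((k + 1) * Fintype.card σ) :=
            Nat.mul_le_mul_right _ ((Finset.card_filter_le _ _).trans hTcard)
        _ = Fintype.card σ ^ (k + 1) * (k + 1)! := by rw [Nat.factorial_succ, pow_succ]; ring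
    · intro D hD hcard
      obtain ⟨D', hD', hcard', b, hb, i, rfl⟩ :=
        Finset.exists_isLowerSet_eq_insert_add_single hD (by omega)
      simp only [Finset.mem_biUnion, Finset.mem_filter, Finset.mem_image, Finset.mem_product,
        Finset.mem_univ, and_true, Prod.exists]
      exact ⟨D', ⟨hT D' hD' (by omega), by omega⟩, b, i, hb, rfl⟩

end LowerSets

theorem pow_mul_factorial_le (n K : ℕ) :
    n ^ (K - 1) * (K - 1)! ≤ (K + n - 2) ^ ((n - 1) * (K - 1)) * (2 * K - 3) ^ (K - 2) := by
  rcases K with _ | _ | j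
  · simp
  · simp
  rw [show j + 2 + n - 2 = j + n by omega, show 2 * (j + 2) - 3 = 2 * j + 1 by omega,
    show j + 2 - 1 = j + 1 by omega, show j + 2 - 2 = j by omega, pow_mul]
  have hn : n ≤ (j + n) ^ (n - 1) := by
    rcases Nat.lt_or_ge n 2 with hn | hn
    · interval_cases n <;> simp
    · exact (Nat.le_self_pow (by omega) n).trans (Nat.pow_le_pow_left (by omega) _)
  have hfact : (j + 1)! ≤ (2 * j + 1) ^ j := calc
    (j + 1)! = (1 + 1).ascFactorial j := by
      simpa [add_comm] using (Nat.factorial_mul_ascFactorial 1 j).symm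
    _ ≤ (1 + j) ^ j := Nat.ascFactorial_le_pow_add 1 j
    _ ≤ (2 * j + 1) ^ j := Nat.pow_le_pow_left (by omega) j
  exact Nat.mul_le_mul (Nat.pow_le_pow_left hn _) hfact

section StandardMonomials

variable {σ R : Type*} [CommSemiring R]

def standardMonomials (I : Ideal (MvPolynomial σ R)) : Set (σ →₀ ℕ) :=
  {a | monomial a 1 ∉ I}

theorem isLowerSet_standardMonomials (I : Ideal (MvPolynomial σ R)) :
    IsLowerSet (standardMonomials I) := by
  intro a b hba ha hb
  apply ha
  rw [← tsub_add_cancel_of_le hba, ← mul_one (1 : R), ← monomial_mul]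
  exact I.mul_mem_left _ hb

theorem MvPolynomial.isCompl_restrictSupport_compl (s : Set (σ →₀ ℕ)) :
    IsCompl (restrictSupport R s) (restrictSupport R sᶜ) := by
  simp only [restrictSupport, AddMonoidAlgebra.supported_eq_map]
  exact (Submodule.orderIsoMapComap _).isCompl_iff.mp
    ⟨Finsupp.disjoint_supported_supported isCompl_compl.disjoint,
      Finsupp.codisjoint_supported_supported isCompl_compl.codisjoint⟩

end StandardMonomials

namespace IsMonomialIdeal

variable {n : ℕ} {F : Type} [Field F] {I : Ideal (MvPolynomial (Fin n) F)}

theorem mem_iff_forall_monomial_mem (hI : IsMonomialIdeal I) {p : MvPolynomial (Fin n) F} :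
    p ∈ I ↔ ∀ a ∈ p.support, monomial a 1 ∈ I := by
  obtain ⟨S, rfl⟩ := hI
  simp [mem_ideal_span_monomial_image]

theorem restrictScalars_eq (hI : IsMonomialIdeal I) :
    I.restrictScalars F = restrictSupport F (standardMonomials I)ᶜ := by
  ext p
  rw [Submodule.restrictScalars_mem, hI.mem_iff_forall_monomial_mem, mem_restrictSupport_iff]
  exact ⟨fun h a ha => not_not_intro (h a ha), fun h a ha => not_not.1 (h ha)⟩

theorem injOn_standardMonomials :
    Set.InjOn standardMonomials {I : Ideal (MvPolynomial (Fin n) F) | IsMonomialIdeal I} :=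
  fun I hI J hJ h => Submodule.restrictScalars_injective F _ _ <| by
    rw [restrictScalars_eq hI, restrictScalars_eq hJ, h]

theorem rank_quotient (hI : IsMonomialIdeal I) :
    Module.rank F (MvPolynomial (Fin n) F ⧸ I) = Cardinal.mk (standardMonomials I) :=
  let e := (Submodule.Quotient.restrictScalarsEquiv F I).symm ≪≫ₗ
    Submodule.quotEquivOfEq _ _ hI.restrictScalars_eq ≪≫ₗ
    Submodule.quotientEquivOfIsCompl _ _ (isCompl_restrictSupport_compl _).symm
  (((basisRestrictSupport F _).map e.symm).mk_eq_rank'').symm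

theorem exists_finset_eq_standardMonomials (hI : IsMonomialIdeal I) {K : ℕ} (hK : K ≠ 0)
    (hrank : Module.finrank F (MvPolynomial (Fin n) F ⧸ I) = K) :
    ∃ D : Finset (Fin n →₀ ℕ), ↑D = standardMonomials I ∧ D.card = K := by
  rwa [← Cardinal.mk_set_eq_nat_iff_finset, ← hI.rank_quotient, ← Cardinal.toNat_eq_iff hK]

end IsMonomialIdeal

theorem statement_5_general (F : Type) [Field F] (n K : ℕ) (hK : 2 ≤ K)
    (m : Fin n → ℕ) :
    {I : Ideal (MvPolynomial (Fin n) F) | IsMonomialIdeal I ∧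
        Module.finrank F (MvPolynomial (Fin n) F ⧸ I) = K ∧
        ∀ i, (X i : MvPolynomial (Fin n) F) ^ m i ∈ I ∧
          (X i : MvPolynomial (Fin n) F) ^ (m i - 1) ∉ I}.ncard
      ≤ (K + n - 2) ^ ((n - 1) * (K - 1)) * (2 * K - 3) ^ (K - 2) := by
  obtain ⟨T, hTcard, hT⟩ := exists_finset_covering_lowerSets_card (Fin n) (K - 1)
  calc _ ≤ (((↑) : Finset (Fin n →₀ ℕ) → Set (Fin n →₀ ℕ)) '' T).ncard := by
        refine Set.ncard_le_ncard_of_injOn standardMonomials ?_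
          (IsMonomialIdeal.injOn_standardMonomials.mono fun I hI => hI.1) (T.finite_toSet.image _)
        rintro I ⟨hI, hrank, -⟩
        obtain ⟨D, hD, hcard⟩ := hI.exists_finset_eq_standardMonomials (by omega) hrank
        exact ⟨D, hT D (hD ▸ isLowerSet_standardMonomials I) (by omega), hD⟩
    _ ≤ T.card := (Set.ncard_image_le T.finite_toSet).trans (Set.ncard_coe_finset T).le
    _ ≤ n ^ (K - 1) * (K - 1)! := by simpa using hTcard
    _ ≤ _ := pow_mul_factorial_le n K

/-- For `K ≥ 2` and positive integers `m_1,…,m_n`, the number of monomial ideals `I` with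
`dim F[X]/I = K`, `X_i^{m_i} ∈ I` and `X_i^{m_i-1} ∉ I` for all `i`, is at most
`(K+n-2)^{(n-1)(K-1)} (2K-3)^{K-2}`. -/
theorem statement_5 (F : Type) [Field F] (n K : ℕ) (hn : 1 ≤ n) (hK : 2 ≤ K)
    (m : Fin n → ℕ) (hm : ∀ i, 1 ≤ m i) :
    {I : Ideal (MvPolynomial (Fin n) F) | IsMonomialIdeal I ∧
        Module.finrank F (MvPolynomial (Fin n) F ⧸ I) = K ∧
        ∀ i, (X i : MvPolynomial (Fin n) F) ^ m i ∈ I ∧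
          (X i : MvPolynomial (Fin n) F) ^ (m i - 1) ∉ I}.ncard
      ≤ (K + n - 2) ^ ((n - 1) * (K - 1)) * (2 * K - 3) ^ (K - 2) :=
  statement_5_general F n K hK m
end

section
/- Let n ≥ 2 and let q be a prime power. For any real numbers ε_1, ε_2 > 0 there exists a constant C (depending on ε_1, ε_2, n, q) such that for every n-tuple (T_1,...,T_n) of positive integers with T_1⋯T_n > C, the number of sequences s : ℕⁿ → F_q that are periodic with period (T_1,...,T_n) and satisfy L(s) > √((1−ε_1)·T_1⋯T_n/(n−1)) is strictly greater than (1 − ε_2) · q^{T_1⋯T_n}. -/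
open MvPolynomial

/-- The value at `m` of the sequence `P·s`, i.e. `∑_j a_j s(m+j)` where `P = ∑_j a_j X^j`. -/
def recSum {n : ℕ} {F : Type} [Field F] (s : (Fin n → ℕ) → F)
    (P : MvPolynomial (Fin n) F) (m : Fin n → ℕ) : F :=
  ∑ j ∈ P.support, P.coeff j * s (fun i => m i + j i)

lemma recSum_superset {n : ℕ} {F : Type} [Field F] (s : (Fin n → ℕ) → F)
    (P : MvPolynomial (Fin n) F) (m : Fin n → ℕ) {T : Finset (Fin n →₀ ℕ)}
    (hT : P.support ⊆ T) :
    ∑ j ∈ T, P.coeff j * s (fun i => m i + j i) = recSum s P m := by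
  refine (Finset.sum_subset hT ?_).symm
  intro j _ hj
  rw [MvPolynomial.notMem_support_iff.mp hj, zero_mul]

/-- `I(s)`: the ideal of all polynomials `P = ∑_j a_j X^j` such that
`∑_j a_j s(m + j) = 0` for all `m`, i.e. of all linear recurrences satisfied by `s`. -/
def seqIdeal {n : ℕ} {F : Type} [Field F] (s : (Fin n → ℕ) → F) :
    Ideal (MvPolynomial (Fin n) F) where
  carrier := {P | ∀ m, recSum s P m = 0}
  zero_mem' := by intro m; simp [recSum]
  add_mem' := by
    intro P Q hP hQ m
    have h : recSum s (P + Q) m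
        = ∑ j ∈ P.support ∪ Q.support, (P + Q).coeff j * s (fun i => m i + j i) :=
      (recSum_superset s (P + Q) m (MvPolynomial.support_add)).symm
    rw [h]
    simp only [MvPolynomial.coeff_add, add_mul]
    rw [Finset.sum_add_distrib,
      recSum_superset s P m Finset.subset_union_left,
      recSum_superset s Q m Finset.subset_union_right, hP m, hQ m, add_zero]
  smul_mem' := by
    intro c P hP
    simp only [smul_eq_mul, Set.mem_setOf_eq] at *
    induction c using MvPolynomial.induction_on generalizing P with
    | C a =>
      intro m
      have hsupp : (C a * P).support ⊆ P.support := by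
        rw [← MvPolynomial.smul_eq_C_mul]
        exact Finsupp.support_smul
      rw [← recSum_superset s (C a * P) m hsupp]
      have : ∀ j ∈ P.support, (C a * P).coeff j * s (fun i => m i + j i)
          = a * (P.coeff j * s (fun i => m i + j i)) := by
        intro j _
        rw [MvPolynomial.coeff_C_mul, mul_assoc]
      rw [Finset.sum_congr rfl this, ← Finset.mul_sum]
      rw [recSum_superset s P m (le_refl _)]
      rw [hP m, mul_zero]
    | add p q hp hq =>
      intro m
      rw [add_mul]
      have h1 := hp hP
      have h2 := hq hP
      have h : recSum s (p * P + q * P) m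
          = ∑ j ∈ (p * P).support ∪ (q * P).support,
            (p * P + q * P).coeff j * s (fun i => m i + j i) :=
        (recSum_superset s _ m (MvPolynomial.support_add)).symm
      rw [h]
      simp only [MvPolynomial.coeff_add, add_mul]
      rw [Finset.sum_add_distrib,
        recSum_superset s _ m Finset.subset_union_left,
        recSum_superset s _ m Finset.subset_union_right, h1 m, h2 m, add_zero]
    | mul_X p i hp =>
      intro m
      rw [mul_assoc]
      have hX : ∀ m', recSum s (X i * P) m' = 0 := by
        intro m'
        unfold recSum
        rw [MvPolynomial.support_X_mul, Finset.sum_map]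
        have : ∀ j ∈ P.support,
            (X i * P).coeff (addLeftEmbedding (Finsupp.single i 1) j)
              * s (fun t => m' t + (addLeftEmbedding (Finsupp.single i 1) j) t)
            = P.coeff j * s (fun t => (m' t + Finsupp.single i 1 t) + j t) := by
          intro j _
          rw [addLeftEmbedding_apply, MvPolynomial.coeff_X_mul]
          have harg : (fun t => m' t + ((Finsupp.single i 1 + j : Fin n →₀ ℕ)) t)
              = fun t => (m' t + Finsupp.single i 1 t) + j t := by
            funext t; rw [Finsupp.add_apply]; ring
          rw [harg]
        rw [Finset.sum_congr rfl this]
        have := hP (fun t => m' t + Finsupp.single i 1 t)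
        unfold recSum at this
        exact this
      exact hp hX m

/-- The linear complexity `L(s)`: the dimension of `F[X_1,…,X_n]/I(s)` over `F`. -/
noncomputable def linComp {n : ℕ} {F : Type} [Field F] (s : (Fin n → ℕ) → F) : ℕ :=
  Module.finrank F (MvPolynomial (Fin n) F ⧸ seqIdeal s)

/-- `s` is periodic with period `(T_1,…,T_n)` if `X_i^{T_i} - 1 ∈ I(s)` for all `i`. -/
def IsPeriodic {n : ℕ} {F : Type} [Field F] (T : Fin n → ℕ) (s : (Fin n → ℕ) → F) : Prop :=
  ∀ i, (X i : MvPolynomial (Fin n) F) ^ T i - 1 ∈ seqIdeal s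

/-- The `k`-error linear complexity `L_k(s)` of a `(T_1,…,T_n)`-periodic sequence `s`:
the minimum of `L(σ)` over all `(T_1,…,T_n)`-periodic sequences `σ` differing from `s`
in at most `k` positions of the box `{m : 0 ≤ m_i ≤ T_i - 1}`. -/
noncomputable def errComp {n : ℕ} {F : Type} [Field F] (T : Fin n → ℕ) (k : ℕ)
    (s : (Fin n → ℕ) → F) : ℕ :=
  sInf {K | ∃ σ : (Fin n → ℕ) → F, IsPeriodic T σ ∧
    ({m : Fin n → ℕ | (∀ i, m i < T i) ∧ σ m ≠ s m}).ncard ≤ k ∧ linComp σ = K}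

/-!
If `L(s) < ∏ g_i`, the residues of the monomials `X^a` with all `a_i < g_i` are linearly
dependent in `F[X]/I(s)`, so `s` satisfies a nonzero recurrence supported in that box. A periodic
sequence is then determined by the recurrence (at most `q^{∏ g_i}` choices) together with its
values on the points of the period box having some `m_i + 1 < g_i`. For `g_i = ⌈T_i / 4⌉` this
leaves at most `q^{∏ T_i - ∏ g_i}` periodic sequences with `L(s) < ∏ g_i`, while
`∏ g_i ≥ ∏ T_i / 4ⁿ` eventually exceeds any `√(c ∏ T_i)`.
-/

open Module

lemma two_mul_prod_le_prod {ι : Type*} [Fintype ι] {f h : ι → ℕ} (hfh : ∀ i, f i ≤ h i) {i₀ : ι}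
    (h₀ : 2 * f i₀ ≤ h i₀) : 2 * ∏ i, f i ≤ ∏ i, h i := by
  classical
  rw [← Finset.mul_prod_erase _ f (Finset.mem_univ i₀),
    ← Finset.mul_prod_erase _ h (Finset.mem_univ i₀), ← mul_assoc]
  exact Nat.mul_le_mul h₀ (Finset.prod_le_prod' fun i _ => hfh i)

lemma prod_le_four_pow_mul_prod {n : ℕ} (T : Fin n → ℕ) :
    ∏ i, T i ≤ 4 ^ n * ∏ i, (T i + 3) / 4 := calc
  ∏ i, T i ≤ ∏ i, 4 * ((T i + 3) / 4) := Finset.prod_le_prod' fun i _ => by omega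
  _ = 4 ^ n * ∏ i, (T i + 3) / 4 := by simp [Finset.prod_mul_distrib]

lemma exists_two_le_of_one_lt_prod {n : ℕ} {T : Fin n → ℕ} (h : 1 < ∏ i, T i) : ∃ i, 2 ≤ T i := by
  by_contra! hT
  exact h.not_ge (Finset.prod_le_one' fun i _ => by have := hT i; omega)

lemma sqrt_mul_lt_of_le_mul {a c P G : ℝ} (ha : 0 < a) (hPG : P ≤ a * G)
    (hP : a ^ 2 * |c| < P) : √(c * P) < G := by
  have hP0 : 0 < P := lt_of_le_of_lt (by positivity) hP
  rw [Real.sqrt_lt' (pos_of_mul_pos_right (hP0.trans_le hPG) ha.le)]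
  have hcP : c * P ≤ |c| * P := mul_le_mul_of_nonneg_right (le_abs_self c) hP0.le
  have h1 : a ^ 2 * (c * P) < P * P := calc
    a ^ 2 * (c * P) ≤ a ^ 2 * |c| * P := by nlinarith [sq_nonneg a]
    _ < P * P := mul_lt_mul_of_pos_right hP hP0
  have h2 : P * P ≤ a ^ 2 * G ^ 2 := by nlinarith
  nlinarith

lemma pow_sub_lt_mul_pow {q ε : ℝ} (hq : 0 < q) (hε : 0 < ε) {K P : ℕ} (hK : ε⁻¹ < q ^ K)
    (hKP : K ≤ P) : q ^ (P - K) < ε * q ^ P := by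
  have h1 : 1 < ε * q ^ K := by rwa [inv_lt_iff_one_lt_mul₀' hε] at hK
  rw [← pow_sub_mul_pow q hKP]
  nlinarith [pow_pos hq (P - K)]

section

variable {n : ℕ} {F : Type} [Field F]

lemma mem_seqIdeal {s : (Fin n → ℕ) → F} {P : MvPolynomial (Fin n) F} :
    P ∈ seqIdeal s ↔ ∀ m, recSum s P m = 0 :=
  Iff.rfl

lemma recSum_eq_constr (s : (Fin n → ℕ) → F) (P : MvPolynomial (Fin n) F) (m : Fin n → ℕ) :
    recSum s P m = (basisMonomials (Fin n) F).constr F (fun j => s (m + ⇑j)) P := by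
  rw [Basis.constr_apply]
  rfl

lemma recSum_sub (s : (Fin n → ℕ) → F) (P Q : MvPolynomial (Fin n) F) (m : Fin n → ℕ) :
    recSum s (P - Q) m = recSum s P m - recSum s Q m := by
  simp only [recSum_eq_constr, map_sub]

lemma recSum_monomial_one (s : (Fin n → ℕ) → F) (j : Fin n →₀ ℕ) (m : Fin n → ℕ) :
    recSum s (monomial j 1) m = s (m + ⇑j) := by
  rw [recSum_eq_constr]
  exact (basisMonomials (Fin n) F).constr_basis F _ j

lemma prod_X_pow_eq_monomial_equivFunOnFinite (a : Fin n → ℕ) :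
    ∏ i, (X i : MvPolynomial (Fin n) F) ^ a i = monomial (Finsupp.equivFunOnFinite.symm a) 1 := by
  rw [monomial_eq, C_1, one_mul, Finsupp.prod_fintype _ _ fun i => pow_zero _]
  rfl

lemma recSum_prod_X_pow (s : (Fin n → ℕ) → F) (a m : Fin n → ℕ) :
    recSum s (∏ i, X i ^ a i) m = s (m + a) := by
  rw [prod_X_pow_eq_monomial_equivFunOnFinite, recSum_monomial_one,
    Finsupp.coe_equivFunOnFinite_symm]

lemma recSum_sum_smul_prod_X_pow {ι : Type*} (s : (Fin n → ℕ) → F) (t : Finset ι)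
    (c : ι → F) (a : ι → Fin n → ℕ) (m : Fin n → ℕ) :
    recSum s (∑ k ∈ t, c k • ∏ i, X i ^ a k i) m = ∑ k ∈ t, c k * s (m + a k) := by
  rw [recSum_eq_constr, map_sum]
  refine Finset.sum_congr rfl fun k _ => ?_
  rw [map_smul, ← recSum_eq_constr, recSum_prod_X_pow, smul_eq_mul]

def box (T : Fin n → ℕ) : Finset (Fin n → ℕ) :=
  Fintype.piFinset fun i => Finset.range (T i)

@[simp]
lemma mem_box {T m : Fin n → ℕ} : m ∈ box T ↔ ∀ i, m i < T i := by
  simp [box]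

lemma card_box (T : Fin n → ℕ) : (box T).card = ∏ i, T i := by
  simp [box]

lemma mod_mem_box {T : Fin n → ℕ} (hT : ∀ i, 0 < T i) (m : Fin n → ℕ) :
    (fun i => m i % T i) ∈ box T :=
  mem_box.mpr fun i => Nat.mod_lt _ (hT i)

namespace IsPeriodic

variable {T : Fin n → ℕ} {s : (Fin n → ℕ) → F}

lemma mk_prod_X_pow_mod (hs : IsPeriodic T s) (a : Fin n → ℕ) :
    Ideal.Quotient.mk (seqIdeal s) (∏ i, X i ^ a i)
      = Ideal.Quotient.mk (seqIdeal s) (∏ i, X i ^ (a i % T i)) := by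
  simp only [map_prod, map_pow]
  refine Finset.prod_congr rfl fun i _ => pow_eq_pow_mod _ ?_
  rw [← map_pow, ← map_one (Ideal.Quotient.mk _), Ideal.Quotient.eq]
  exact hs i

lemma apply_mod (hs : IsPeriodic T s) (m : Fin n → ℕ) : s m = s (fun i => m i % T i) := by
  have h := mem_seqIdeal.mp (Ideal.Quotient.eq.mp (hs.mk_prod_X_pow_mod m)) 0
  rwa [recSum_sub, recSum_prod_X_pow, recSum_prod_X_pow, zero_add, zero_add, sub_eq_zero] at h

lemma finite_quotient (hT : ∀ i, 0 < T i) (hs : IsPeriodic T s) :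
    Module.Finite F (MvPolynomial (Fin n) F ⧸ seqIdeal s) := by
  set π := Ideal.Quotient.mkₐ F (seqIdeal s)
  let v : box T → MvPolynomial (Fin n) F ⧸ seqIdeal s := fun a => π (∏ i, X i ^ (a : Fin n → ℕ) i)
  have hspan : ∀ P, π P ∈ Submodule.span F (Set.range v) := by
    intro P
    induction P using MvPolynomial.induction_on' with
    | monomial d c =>
      have hd : π (monomial d 1) = v ⟨_, mod_mem_box hT d⟩ := by
        simp only [π, v, Ideal.Quotient.mkₐ_eq_mk]
        rw [← hs.mk_prod_X_pow_mod, prod_X_pow_eq_monomial_equivFunOnFinite,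
          Finsupp.equivFunOnFinite_symm_coe]
      rw [← mul_one c, ← smul_eq_mul, ← smul_monomial, map_smul, hd]
      exact Submodule.smul_mem _ _ (Submodule.subset_span ⟨_, rfl⟩)
    | add P Q hP hQ => exact map_add π P Q ▸ Submodule.add_mem _ hP hQ
  refine Module.Finite.of_surjective (Fintype.linearCombination F v) fun x => ?_
  obtain ⟨P, rfl⟩ := Ideal.Quotient.mkₐ_surjective F (seqIdeal s) x
  rw [← LinearMap.mem_range, Fintype.range_linearCombination]
  exact hspan P

lemma exists_relation (hT : ∀ i, 0 < T i) (hs : IsPeriodic T s) {g : Fin n → ℕ}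
    (hL : linComp s < ∏ i, g i) :
    ∃ c : box g → F, c ≠ 0 ∧ ∀ m, ∑ a, c a * s (m + a) = 0 := by
  -- `linComp s` is a `finrank`, which would be `0` for an infinite-dimensional quotient.
  have := hs.finite_quotient hT
  set π := Ideal.Quotient.mkₐ F (seqIdeal s)
  have hdep : ¬LinearIndependent F fun a : box g => π (∏ i, X i ^ (a : Fin n → ℕ) i) := by
    intro hli
    have := hli.fintype_card_le_finrank
    rw [Fintype.card_coe, card_box] at this
    exact (this.trans_lt hL).false
  obtain ⟨c, hc, a, ha⟩ := Fintype.not_linearIndependent_iff.mp hdep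
  refine ⟨c, Function.ne_iff.mpr ⟨a, ha⟩, fun m => ?_⟩
  have hmem : ∑ a : box g, c a • ∏ i, X i ^ (a : Fin n → ℕ) i ∈ seqIdeal s := by
    rw [← Ideal.Quotient.eq_zero_iff_mem, ← Ideal.Quotient.mkₐ_eq_mk F, map_sum]
    simpa only [map_smul] using hc
  rw [← recSum_sum_smul_prod_X_pow]
  exact mem_seqIdeal.mp hmem m

end IsPeriodic

lemma isPeriodic_of_apply_mod {T : Fin n → ℕ} {s : (Fin n → ℕ) → F}
    (h : ∀ m, s m = s (fun i => m i % T i)) : IsPeriodic T s := by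
  classical
  intro i
  refine mem_seqIdeal.mpr fun m => ?_
  rw [X_pow_eq_monomial, ← C_1, ← monomial_zero', recSum_sub, recSum_monomial_one,
    recSum_monomial_one, sub_eq_zero, h, h (m + _)]
  congr 1
  funext j
  by_cases hj : j = i
  · subst hj
    simp
  · simp [Ne.symm hj]

/-- Induction along the lexicographic order: outside the region where `d` vanishes, `m` dominates
the lex-largest exponent `ℓ` of the relation, and the relation at `m - ℓ` expresses `d m` through
values of `d` at lex-smaller points. -/
lemma eq_zero_of_relation {g : Fin n → ℕ} {d : (Fin n → ℕ) → F} {c : box g → F} (hc : c ≠ 0)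
    (hrel : ∀ m, ∑ a, c a * d (m + a) = 0) (hd : ∀ m, (∃ i, m i + 1 < g i) → d m = 0) :
    d = 0 := by
  classical
  obtain ⟨ℓ, hℓc, hℓmax⟩ := (Finset.univ.filter fun a => c a ≠ 0).exists_max_image
    (fun a => toLex (a : Fin n → ℕ))
    (by simpa [Finset.filter_nonempty_iff, Function.ne_iff] using hc)
  replace hℓc : c ℓ ≠ 0 := (Finset.mem_filter.mp hℓc).2
  funext m
  induction hm : toLex m using WellFoundedLT.induction generalizing m with
  | _ x ih =>
    subst hm
    by_cases hD : ∃ i, m i + 1 < g i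
    · exact hd m hD
    push Not at hD
    have hℓm : (ℓ : Fin n → ℕ) ≤ m := Pi.le_def.mpr fun i => by
      have := mem_box.mp ℓ.2 i
      have := hD i
      omega
    have hsplit : m - ℓ + ℓ = m := tsub_add_cancel_of_le hℓm
    have hlower : ∀ a, a ≠ ℓ → c a * d (m - ℓ + a) = 0 := by
      intro a ha
      by_cases hca : c a = 0
      · rw [hca, zero_mul]
      have hlt : toLex (a : Fin n → ℕ) < toLex (ℓ : Fin n → ℕ) :=
        (hℓmax a (by simpa using hca)).lt_of_ne fun h => ha (Subtype.ext (toLex.injective h))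
      have hlt' : toLex (m - ℓ + a) < toLex m :=
        lt_of_lt_of_eq (add_lt_add_right hlt (toLex (m - ℓ))) (congrArg toLex hsplit)
      rw [ih _ hlt' _ rfl, Pi.zero_apply, mul_zero]
    have := hrel (m - ℓ)
    rw [Finset.sum_eq_single ℓ (fun a _ ha => hlower a ha) (by simp), hsplit] at this
    exact (mul_eq_zero.mp this).resolve_left hℓc

lemma IsPeriodic.eq_of_relation {T g : Fin n → ℕ} (hT : ∀ i, 0 < T i) {s s' : (Fin n → ℕ) → F}
    (hs : IsPeriodic T s) (hs' : IsPeriodic T s') {c : box g → F} (hc : c ≠ 0)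
    (hrel : ∀ m, ∑ a, c a * s (m + a) = 0) (hrel' : ∀ m, ∑ a, c a * s' (m + a) = 0)
    (hagree : ∀ m ∈ box T, (∃ i, m i + 1 < g i) → s m = s' m) : s = s' := by
  refine sub_eq_zero.mp (eq_zero_of_relation hc (fun m => ?_) fun m ⟨i, hi⟩ => ?_)
  · simp only [Pi.sub_apply, mul_sub, Finset.sum_sub_distrib, hrel, hrel', sub_zero]
  · rw [Pi.sub_apply, hs.apply_mod, hs'.apply_mod, sub_eq_zero]
    exact hagree _ (mod_mem_box hT m) ⟨i, (Nat.add_le_add_right (Nat.mod_le _ _) 1).trans_lt hi⟩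

section Counting

variable {T : Fin n → ℕ}

def periodicEquivBox (hT : ∀ i, 0 < T i) :
    {s : (Fin n → ℕ) → F // IsPeriodic T s} ≃ (box T → F) where
  toFun s a := s.1 a
  invFun f := ⟨fun m => f ⟨_, mod_mem_box hT m⟩, isPeriodic_of_apply_mod fun m => by
    simp only [Nat.mod_mod]⟩
  left_inv s := Subtype.ext (funext fun m => (s.2.apply_mod m).symm)
  right_inv f := funext fun a => congrArg f (Subtype.ext (funext fun i =>
    Nat.mod_eq_of_lt (mem_box.mp a.2 i)))

variable [Fintype F]

lemma finite_setOf_isPeriodic (hT : ∀ i, 0 < T i) :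
    {s : (Fin n → ℕ) → F | IsPeriodic T s}.Finite :=
  Set.finite_coe_iff.mp (Finite.of_equiv _ (periodicEquivBox hT).symm)

lemma ncard_setOf_isPeriodic (hT : ∀ i, 0 < T i) :
    {s : (Fin n → ℕ) → F | IsPeriodic T s}.ncard = Fintype.card F ^ ∏ i, T i := by
  rw [← Nat.card_coe_set_eq]
  refine (Nat.card_congr (periodicEquivBox hT)).trans ?_
  rw [Nat.card_eq_fintype_card, Fintype.card_fun, Fintype.card_coe, card_box]

lemma card_filter_exists_add_one_lt {g : Fin n → ℕ} (hg : ∀ i, 0 < g i) :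
    ((box T).filter fun m => ∃ i, m i + 1 < g i).card = ∏ i, T i - ∏ i, (T i + 1 - g i) := by
  classical
  have hcompl : (box T).filter (fun m => ¬∃ i, m i + 1 < g i)
      = Fintype.piFinset fun i => Finset.Ico (g i - 1) (T i) := by
    ext m
    simp only [Finset.mem_filter, mem_box, Fintype.mem_piFinset, Finset.mem_Ico, not_exists, not_lt]
    exact ⟨fun h i => by have := h.1 i; have := h.2 i; omega,
      fun h => ⟨fun i => (h i).2, fun i => by have := h i; omega⟩⟩
  have := Finset.card_filter_add_card_filter_not (s := box T) fun m => ∃ i, m i + 1 < g i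
  rw [hcompl, Fintype.card_piFinset, card_box] at this
  simp only [Nat.card_Ico] at this
  rw [← this, Finset.prod_congr rfl fun i _ => (by have := hg i; omega :
    T i - (g i - 1) = T i + 1 - g i)]
  omega

lemma ncard_isPeriodic_linComp_lt_le (hT : ∀ i, 0 < T i) {g : Fin n → ℕ} (hg : ∀ i, 0 < g i) :
    {s : (Fin n → ℕ) → F | IsPeriodic T s ∧ linComp s < ∏ i, g i}.ncard
      ≤ Fintype.card F ^ (∏ i, g i + (∏ i, T i - ∏ i, (T i + 1 - g i))) := by
  classical
  set D := (box T).filter fun m => ∃ i, m i + 1 < g i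
  set Bad := {s : (Fin n → ℕ) → F | IsPeriodic T s ∧ linComp s < ∏ i, g i}
  have hrel (s : Bad) := s.2.1.exists_relation hT s.2.2
  choose c hc hcs using hrel
  have hinj : Function.Injective fun s : Bad => (c s, fun m : D => s.1 m) := by
    intro s s' h
    simp only [Prod.mk.injEq] at h
    refine Subtype.ext (s.2.1.eq_of_relation hT s'.2.1 (hc s) (hcs s) (h.1 ▸ hcs s') ?_)
    exact fun m hm hD => congrFun h.2 ⟨m, Finset.mem_filter.mpr ⟨hm, hD⟩⟩
  rw [← Nat.card_coe_set_eq]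
  refine (Nat.card_le_card_of_injective _ hinj).trans_eq ?_
  rw [Nat.card_eq_fintype_card, Fintype.card_prod, Fintype.card_fun, Fintype.card_fun,
    Fintype.card_coe, Fintype.card_coe, card_box, card_filter_exists_add_one_lt hg, pow_add]

lemma ncard_isPeriodic_linComp_lt_quarter_le (hT : ∀ i, 0 < T i) {i₀ : Fin n} (hi₀ : 2 ≤ T i₀) :
    {s : (Fin n → ℕ) → F | IsPeriodic T s ∧ linComp s < ∏ i, (T i + 3) / 4}.ncard
      ≤ Fintype.card F ^ (∏ i, T i - ∏ i, (T i + 3) / 4) := by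
  have hg : ∀ i, 0 < (T i + 3) / 4 := fun i => by have := hT i; omega
  refine (ncard_isPeriodic_linComp_lt_le hT hg).trans (Nat.pow_le_pow_right Fintype.card_pos ?_)
  have hEP : ∏ i, (T i + 1 - (T i + 3) / 4) ≤ ∏ i, T i :=
    Finset.prod_le_prod' fun i _ => by have := hT i; omega
  have hGE : 2 * ∏ i, (T i + 3) / 4 ≤ ∏ i, (T i + 1 - (T i + 3) / 4) :=
    two_mul_prod_le_prod (i₀ := i₀) (fun i => by have := hT i; omega) (by omega)
  omega

lemma pow_le_ncard_lt_linComp_add (hT : ∀ i, 0 < T i) {i₀ : Fin n} (hi₀ : 2 ≤ T i₀) {x : ℝ}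
    (hx : x < ∏ i, (T i + 3) / 4) :
    Fintype.card F ^ ∏ i, T i ≤ {s : (Fin n → ℕ) → F | IsPeriodic T s ∧ x < linComp s}.ncard
      + Fintype.card F ^ (∏ i, T i - ∏ i, (T i + 3) / 4) := by
  have hcover : {s : (Fin n → ℕ) → F | IsPeriodic T s}
      ⊆ {s | IsPeriodic T s ∧ x < linComp s}
        ∪ {s | IsPeriodic T s ∧ linComp s < ∏ i, (T i + 3) / 4} := fun s hs => by
    by_cases hL : linComp s < ∏ i, (T i + 3) / 4
    · exact Or.inr ⟨hs, hL⟩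
    · exact Or.inl ⟨hs, hx.trans_le (by exact_mod_cast not_lt.mp hL)⟩
  rw [← ncard_setOf_isPeriodic hT]
  refine (Set.ncard_le_ncard hcover ((finite_setOf_isPeriodic hT).subset
    (Set.union_subset (fun s hs => hs.1) fun s hs => hs.1))).trans ?_
  exact (Set.ncard_union_le _ _).trans
    (Nat.add_le_add_left (ncard_isPeriodic_linComp_lt_quarter_le hT hi₀) _)

end Counting

end

theorem statement_14_general {n : ℕ} {F : Type} [Field F] [Fintype F]
    (q : ℕ) (hq : Fintype.card F = q)
    (ε₁ ε₂ : ℝ) (hε₂ : 0 < ε₂) :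
    ∃ C : ℝ, ∀ T : Fin n → ℕ, (∀ i, 0 < T i) → ((∏ i, T i : ℕ) : ℝ) > C →
      (1 - ε₂) * (q : ℝ) ^ (∏ i, T i)
        < ({s : (Fin n → ℕ) → F | IsPeriodic T s ∧
            Real.sqrt ((1 - ε₁) * (∏ i, T i) / ((n : ℝ) - 1)) < (linComp s : ℝ)}.ncard : ℝ) := by
  subst hq
  have hq : (1 : ℝ) < Fintype.card F := by exact_mod_cast Fintype.one_lt_card
  obtain ⟨K, hK⟩ := pow_unbounded_of_one_lt ε₂⁻¹ hq
  set c := (1 - ε₁) / ((n : ℝ) - 1)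
  refine ⟨((4 : ℝ) ^ n) ^ 2 * (|c| + 1) + K * 4 ^ n, fun T hT hP => ?_⟩
  set G := ∏ i, (T i + 3) / 4
  have hPG : ((∏ i, T i : ℕ) : ℝ) ≤ 4 ^ n * G := by exact_mod_cast prod_le_four_pow_mul_prod T
  have h1 : (1 : ℝ) ≤ ((4 : ℝ) ^ n) ^ 2 := one_le_pow₀ (one_le_pow₀ (by norm_num))
  have hc : (0 : ℝ) ≤ ((4 : ℝ) ^ n) ^ 2 * |c| := by positivity
  have hK4 : (0 : ℝ) ≤ K * 4 ^ n := by positivity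
  have hKG : K ≤ G := by
    have : (K : ℝ) < G := lt_of_mul_lt_mul_left (by linarith) (by positivity : (0 : ℝ) ≤ 4 ^ n)
    exact_mod_cast this.le
  obtain ⟨i₀, hi₀⟩ := exists_two_le_of_one_lt_prod (T := T) (by exact_mod_cast (by linarith :
    (1 : ℝ) < ((∏ i, T i : ℕ) : ℝ)))
  have hsqrt : √((1 - ε₁) * ((∏ i, T i : ℕ) : ℝ) / ((n : ℝ) - 1)) < G := by
    rw [mul_div_right_comm]
    exact sqrt_mul_lt_of_le_mul (by positivity) hPG (by linarith)
  have hGP : G ≤ ∏ i, T i := Finset.prod_le_prod' fun i _ => by have := hT i; omega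
  have hsmall :=
    pow_sub_lt_mul_pow (by linarith) hε₂ (hK.trans_le (pow_le_pow_right₀ hq.le hKG)) hGP
  have hcount := pow_le_ncard_lt_linComp_add (F := F) hT hi₀ hsqrt
  rw [← Nat.cast_le (α := ℝ), Nat.cast_add, Nat.cast_pow, Nat.cast_pow] at hcount
  linarith

/-- For any `ε₁, ε₂ > 0` there is a constant `C` (depending on `ε₁, ε₂, n, q`) such that if
`T_1 ⋯ T_n > C`, the number of `(T_1,…,T_n)`-periodic sequences `s` with
`L(s) > √((1-ε₁) T_1 ⋯ T_n / (n-1))` is strictly greater than `(1-ε₂) q^{T_1 ⋯ T_n}`. -/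
theorem statement_14 {n : ℕ} (hn : 2 ≤ n) {F : Type} [Field F] [Fintype F]
    (q : ℕ) (hq : Fintype.card F = q)
    (ε₁ ε₂ : ℝ) (hε₁ : 0 < ε₁) (hε₂ : 0 < ε₂) :
    ∃ C : ℝ, ∀ T : Fin n → ℕ, (∀ i, 0 < T i) → ((∏ i, T i : ℕ) : ℝ) > C →
      (1 - ε₂) * (q : ℝ) ^ (∏ i, T i)
        < ({s : (Fin n → ℕ) → F | IsPeriodic T s ∧
            Real.sqrt ((1 - ε₁) * (∏ i, T i) / ((n : ℝ) - 1)) < (linComp s : ℝ)}.ncard : ℝ) :=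
  statement_14_general q hq ε₁ ε₂ hε₂
end
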